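/- For all z₀, z₁ ∈ Ω×[0,∞) and all 0 ≤ s ≤ t ≤ 1, the geodesic interpolator satisfies d_C( Z(s;z₀,z₁), Z(t;z₀,z₁) ) = (t − s)·d_C(z₀,z₁); in particular s ↦ Z(s;z₀,z₁) is a constant-speed geodesic in the cone connecting z₀ and z₁. -/

import Mathlib

open MeasureTheory Set
open scoped NNReal ENNReal

/-- The ambient Euclidean space `ℝ^d`. -/
noncomputable abbrev Euc (d : ℕ) := EuclideanSpace ℝ (Fin d)

/-- `cos_π(a) := cos (min |a| π)`. -/
noncomputable def cosPi (a : ℝ) : ℝ := Real.cos (min |a| Real.pi)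

/-- The cone distance on `ℝ^d × [0,∞)`:
`d_C((x₀,r₀),(x₁,r₁)) = √(r₀² + r₁² − 2r₀r₁ cos_π(|x₁−x₀|))`.
All points with `r = 0` are identified with the tip of the cone. -/
noncomputable def coneDist {d : ℕ} (z₀ z₁ : Euc d × ℝ≥0) : ℝ :=
  Real.sqrt ((z₀.2 : ℝ)^2 + (z₁.2 : ℝ)^2
    - 2 * (z₀.2 : ℝ) * (z₁.2 : ℝ) * cosPi (dist z₁.1 z₀.1))

/-- The radius component `R(s;z₀,z₁)` of the geodesic interpolator on the cone. -/
noncomputable def Rgeo {d : ℕ} (s : ℝ) (z₀ z₁ : Euc d × ℝ≥0) : ℝ :=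
  Real.sqrt ((1 - s)^2 * (z₀.2 : ℝ)^2 + s^2 * (z₁.2 : ℝ)^2
    + 2 * s * (1 - s) * (z₀.2 : ℝ) * (z₁.2 : ℝ) * cosPi (dist z₁.1 z₀.1))

/-- The interpolation parameter `ρ(s;z₀,z₁)` of the geodesic interpolator. -/
noncomputable def rhoGeo {d : ℕ} (s : ℝ) (z₀ z₁ : Euc d × ℝ≥0) : ℝ :=
  if 0 < dist z₁.1 z₀.1 ∧ dist z₁.1 z₀.1 < Real.pi ∧ 0 < Rgeo s z₀ z₁ then
    (dist z₁.1 z₀.1)⁻¹ *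
      Real.arccos (((1 - s) * (z₀.2 : ℝ) + s * (z₁.2 : ℝ) * Real.cos (dist z₁.1 z₀.1))
        / Rgeo s z₀ z₁)
  else if Real.pi ≤ dist z₁.1 z₀.1 then
    (1 + Real.sign ((1 - s) * (z₀.2 : ℝ) - s * (z₁.2 : ℝ))) / 2
  else 0

/-- The spatial component `X(s;z₀,z₁) = (1−ρ)x₀ + ρx₁` of the geodesic interpolator. -/
noncomputable def Xgeo {d : ℕ} (s : ℝ) (z₀ z₁ : Euc d × ℝ≥0) : Euc d :=
  (1 - rhoGeo s z₀ z₁) • z₀.1 + rhoGeo s z₀ z₁ • z₁.1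

/-- The geodesic interpolator `Z(s;z₀,z₁) = (X(s;z₀,z₁), R(s;z₀,z₁))` on the cone. -/
noncomputable def Zgeo {d : ℕ} (s : ℝ) (z₀ z₁ : Euc d × ℝ≥0) : Euc d × ℝ≥0 :=
  (Xgeo s z₀ z₁, Real.toNNReal (Rgeo s z₀ z₁))

/-!
Over the segment `[x₀, x₁]` the cone is a planar sector of opening angle `θ = min |x₁ - x₀| π`:
put `z₀` at `r₀` and `z₁` at `r₁ e^{iθ}`, so that `d_C(z₀, z₁) = |r₀ - r₁ e^{iθ}|`. The
interpolator `Z(u)` is the point `(1 - u) r₀ + u r₁ e^{iθ}` of the straight chord, written in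
polar coordinates: `R(u)` is its modulus and `ρ(u) |x₁ - x₀|` its argument (when `θ = π` the
sector is a line, and `ρ ∈ {0, 1}` only records on which side of the tip `Z(u)` lies). Distances
along a straight chord scale linearly, which is the claim.
-/

open Real Complex ComplexConjugate

lemma Complex.norm_mul_norm_mul_cos_arg_sub (z w : ℂ) :
    ‖z‖ * ‖w‖ * Real.cos (arg z - arg w) = (z * conj w).re := by
  rw [mul_re, conj_re, conj_im, ← norm_mul_cos_arg z, ← norm_mul_cos_arg w,
    ← norm_mul_sin_arg z, ← norm_mul_sin_arg w, Real.cos_sub]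
  ring

lemma Complex.normSq_add_mul_exp_mul_I (a b θ : ℝ) :
    normSq (a + b * exp (θ * I)) = a ^ 2 + b ^ 2 + 2 * a * b * Real.cos θ := by
  rw [exp_mul_I, ← ofReal_cos, ← ofReal_sin]
  simp only [normSq_apply, add_re, add_im, mul_re, mul_im, ofReal_re, ofReal_im, I_re, I_im]
  linear_combination b ^ 2 * Real.sin_sq_add_cos_sq θ

lemma cosPi_of_nonneg {a : ℝ} (ha : 0 ≤ a) : cosPi a = Real.cos (min a π) := by
  rw [cosPi, abs_of_nonneg ha]

namespace Cone

variable {d : ℕ}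

noncomputable def angle (z₀ z₁ : Euc d × ℝ≥0) : ℝ := min (dist z₁.1 z₀.1) π

noncomputable def chord (u : ℝ) (z₀ z₁ : Euc d × ℝ≥0) : ℂ :=
  ((1 - u) * z₀.2 : ℝ) + (u * z₁.2 : ℝ) * exp (angle z₀ z₁ * I)

lemma cosPi_dist (z₀ z₁ : Euc d × ℝ≥0) :
    cosPi (dist z₁.1 z₀.1) = Real.cos (angle z₀ z₁) :=
  cosPi_of_nonneg dist_nonneg

lemma Rgeo_eq_norm_chord (u : ℝ) (z₀ z₁ : Euc d × ℝ≥0) :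
    Rgeo u z₀ z₁ = ‖chord u z₀ z₁‖ := by
  rw [Rgeo, norm_def, chord, normSq_add_mul_exp_mul_I, cosPi_dist]
  ring_nf

lemma coneDist_eq_norm_chord_sub (z₀ z₁ : Euc d × ℝ≥0) :
    coneDist z₀ z₁ = ‖chord 0 z₀ z₁ - chord 1 z₀ z₁‖ := by
  have h : chord 0 z₀ z₁ - chord 1 z₀ z₁ = (z₀.2 : ℝ) + (-z₁.2 : ℝ) * exp (angle z₀ z₁ * I) := by
    simp only [chord]; push_cast; ring
  rw [coneDist, h, norm_def, normSq_add_mul_exp_mul_I, cosPi_dist]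
  ring_nf

lemma chord_sub_chord (s t : ℝ) (z₀ z₁ : Euc d × ℝ≥0) :
    chord s z₀ z₁ - chord t z₀ z₁ = (t - s : ℝ) * (chord 0 z₀ z₁ - chord 1 z₀ z₁) := by
  simp only [chord]; push_cast; ring

lemma re_chord (u : ℝ) (z₀ z₁ : Euc d × ℝ≥0) :
    (chord u z₀ z₁).re = (1 - u) * z₀.2 + u * z₁.2 * Real.cos (angle z₀ z₁) := by
  simp [chord, exp_ofReal_mul_I_re]

lemma im_chord_nonneg {u : ℝ} (hu : 0 ≤ u) (z₀ z₁ : Euc d × ℝ≥0) : 0 ≤ (chord u z₀ z₁).im := by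
  have hsin : 0 ≤ Real.sin (angle z₀ z₁) :=
    sin_nonneg_of_nonneg_of_le_pi (le_min dist_nonneg pi_pos.le) (min_le_right _ _)
  simpa [chord, exp_ofReal_mul_I_im] using mul_nonneg (mul_nonneg hu z₁.2.2) hsin

lemma dist_Xgeo (s t : ℝ) (z₀ z₁ : Euc d × ℝ≥0) :
    dist (Xgeo t z₀ z₁) (Xgeo s z₀ z₁)
      = |rhoGeo t z₀ z₁ - rhoGeo s z₀ z₁| * dist z₁.1 z₀.1 := by
  rw [Xgeo, Xgeo, dist_eq_norm, dist_eq_norm, ← Real.norm_eq_abs, ← norm_smul]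
  congr 1
  module

lemma arg_chord_of_dist_eq_zero {u : ℝ} (hu₀ : 0 ≤ u) (hu₁ : u ≤ 1) {z₀ z₁ : Euc d × ℝ≥0}
    (hD : dist z₁.1 z₀.1 = 0) : arg (chord u z₀ z₁) = 0 := by
  have hθ : angle z₀ z₁ = 0 := by rw [angle, hD, min_eq_left pi_pos.le]
  rw [chord, hθ, ofReal_zero, zero_mul, Complex.exp_zero, mul_one, ← ofReal_add]
  have := sub_nonneg.2 hu₁
  exact arg_ofReal_of_nonneg (by positivity)

lemma rhoGeo_mul_dist_eq_arg_chord {u : ℝ} (hu : 0 ≤ u) {z₀ z₁ : Euc d × ℝ≥0}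
    (hD₀ : 0 < dist z₁.1 z₀.1) (hDπ : dist z₁.1 z₀.1 < π) (hc : chord u z₀ z₁ ≠ 0) :
    rhoGeo u z₀ z₁ * dist z₁.1 z₀.1 = arg (chord u z₀ z₁) := by
  have hR : 0 < Rgeo u z₀ z₁ := by rw [Rgeo_eq_norm_chord]; exact norm_pos_iff.2 hc
  have hθ : angle z₀ z₁ = dist z₁.1 z₀.1 := min_eq_left hDπ.le
  rw [rhoGeo, if_pos ⟨hD₀, hDπ, hR⟩, arg_of_im_nonneg_of_ne_zero (im_chord_nonneg hu _ _) hc,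
    re_chord, ← Rgeo_eq_norm_chord, hθ]
  field_simp

lemma chord_of_pi_le (u : ℝ) {z₀ z₁ : Euc d × ℝ≥0} (hD : π ≤ dist z₁.1 z₀.1) :
    chord u z₀ z₁ = ((1 - u) * z₀.2 - u * z₁.2 : ℝ) := by
  rw [chord, angle, min_eq_right hD, exp_pi_mul_I]
  push_cast; ring

lemma rhoGeo_of_pi_le (u : ℝ) {z₀ z₁ : Euc d × ℝ≥0} (hD : π ≤ dist z₁.1 z₀.1) :
    rhoGeo u z₀ z₁ = (1 + Real.sign ((1 - u) * z₀.2 - u * z₁.2)) / 2 := by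
  rw [rhoGeo, if_neg (fun h ↦ hD.not_gt h.2.1), if_pos hD]

lemma cosPi_dist_Xgeo_of_lt_pi {s t : ℝ} (hs : 0 ≤ s) (ht : 0 ≤ t) {z₀ z₁ : Euc d × ℝ≥0}
    (hD₀ : 0 < dist z₁.1 z₀.1) (hDπ : dist z₁.1 z₀.1 < π)
    (hcs : chord s z₀ z₁ ≠ 0) (hct : chord t z₀ z₁ ≠ 0) :
    cosPi (dist (Xgeo t z₀ z₁) (Xgeo s z₀ z₁))
      = Real.cos (arg (chord s z₀ z₁) - arg (chord t z₀ z₁)) := by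
  have harg : ∀ {u}, 0 ≤ u → 0 ≤ arg (chord u z₀ z₁) := fun hu ↦
    arg_nonneg_iff.2 (im_chord_nonneg hu _ _)
  have hle : |arg (chord s z₀ z₁) - arg (chord t z₀ z₁)| ≤ π := by
    have := harg hs; have := harg ht; have := arg_le_pi (chord s z₀ z₁)
    have := arg_le_pi (chord t z₀ z₁)
    rw [abs_le]; constructor <;> linarith
  rw [dist_Xgeo, abs_sub_comm, ← abs_of_pos hD₀, ← abs_mul, sub_mul,
    rhoGeo_mul_dist_eq_arg_chord hs hD₀ hDπ hcs, rhoGeo_mul_dist_eq_arg_chord ht hD₀ hDπ hct,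
    cosPi, abs_abs, min_eq_left hle, Real.cos_abs]

lemma cosPi_dist_Xgeo_of_pi_le (s t : ℝ) {z₀ z₁ : Euc d × ℝ≥0} (hD : π ≤ dist z₁.1 z₀.1)
    (hcs : chord s z₀ z₁ ≠ 0) (hct : chord t z₀ z₁ ≠ 0) :
    cosPi (dist (Xgeo t z₀ z₁) (Xgeo s z₀ z₁))
      = Real.cos (arg (chord s z₀ z₁) - arg (chord t z₀ z₁)) := by
  rw [chord_of_pi_le _ hD, ofReal_ne_zero] at hcs hct
  rw [dist_Xgeo, rhoGeo_of_pi_le _ hD, rhoGeo_of_pi_le _ hD, chord_of_pi_le _ hD,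
    chord_of_pi_le _ hD]
  generalize (1 - s) * (z₀.2 : ℝ) - s * z₁.2 = a at hcs ⊢
  generalize (1 - t) * (z₀.2 : ℝ) - t * z₁.2 = b at hct ⊢
  rcases hcs.lt_or_gt with ha | ha <;> rcases hct.lt_or_gt with hb | hb <;>
    simp [Real.sign_of_neg, Real.sign_of_pos, arg_ofReal_of_neg, arg_ofReal_of_nonneg,
      ha, hb, ha.le, hb.le, cosPi, min_eq_right hD, pi_pos.le]

lemma cosPi_dist_Xgeo {s t : ℝ} (hs₀ : 0 ≤ s) (hs₁ : s ≤ 1) (ht₀ : 0 ≤ t) (ht₁ : t ≤ 1)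
    {z₀ z₁ : Euc d × ℝ≥0} (hcs : chord s z₀ z₁ ≠ 0) (hct : chord t z₀ z₁ ≠ 0) :
    cosPi (dist (Xgeo t z₀ z₁) (Xgeo s z₀ z₁))
      = Real.cos (arg (chord s z₀ z₁) - arg (chord t z₀ z₁)) := by
  rcases (dist_nonneg (x := z₁.1) (y := z₀.1)).eq_or_lt with hD | hD₀
  · rw [dist_Xgeo, ← hD, mul_zero, arg_chord_of_dist_eq_zero hs₀ hs₁ hD.symm,
      arg_chord_of_dist_eq_zero ht₀ ht₁ hD.symm, sub_self, cosPi_of_nonneg le_rfl,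
      min_eq_left pi_pos.le]
  rcases lt_or_ge (dist z₁.1 z₀.1) π with hDπ | hπD
  · exact cosPi_dist_Xgeo_of_lt_pi hs₀ ht₀ hD₀ hDπ hcs hct
  · exact cosPi_dist_Xgeo_of_pi_le s t hπD hcs hct

lemma Rgeo_mul_Rgeo_mul_cosPi_dist_Xgeo {s t : ℝ} (hs₀ : 0 ≤ s) (hs₁ : s ≤ 1) (ht₀ : 0 ≤ t)
    (ht₁ : t ≤ 1) (z₀ z₁ : Euc d × ℝ≥0) :
    Rgeo s z₀ z₁ * Rgeo t z₀ z₁ * cosPi (dist (Xgeo t z₀ z₁) (Xgeo s z₀ z₁))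
      = (chord s z₀ z₁ * conj (chord t z₀ z₁)).re := by
  rw [Rgeo_eq_norm_chord, Rgeo_eq_norm_chord]
  by_cases hcs : chord s z₀ z₁ = 0
  · simp [hcs]
  by_cases hct : chord t z₀ z₁ = 0
  · simp [hct]
  rw [cosPi_dist_Xgeo hs₀ hs₁ ht₀ ht₁ hcs hct, norm_mul_norm_mul_cos_arg_sub]

lemma coneDist_Zgeo_eq_norm_chord_sub {s t : ℝ} (hs₀ : 0 ≤ s) (hs₁ : s ≤ 1) (ht₀ : 0 ≤ t)
    (ht₁ : t ≤ 1) (z₀ z₁ : Euc d × ℝ≥0) :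
    coneDist (Zgeo s z₀ z₁) (Zgeo t z₀ z₁) = ‖chord s z₀ z₁ - chord t z₀ z₁‖ := by
  rw [coneDist, Zgeo, Zgeo, norm_def, normSq_sub,
    ← Rgeo_mul_Rgeo_mul_cosPi_dist_Xgeo hs₀ hs₁ ht₀ ht₁, ← Complex.sq_norm, ← Complex.sq_norm,
    ← Rgeo_eq_norm_chord, ← Rgeo_eq_norm_chord]
  simp only [Real.coe_toNNReal _ (Real.sqrt_nonneg _), Rgeo]
  ring_nf

end Cone

open Cone in
theorem coneDist_Zgeo {d : ℕ} (z₀ z₁ : Euc d × ℝ≥0)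
    (s t : ℝ) (hs : 0 ≤ s) (hst : s ≤ t) (ht : t ≤ 1) :
    coneDist (Zgeo s z₀ z₁) (Zgeo t z₀ z₁) = (t - s) * coneDist z₀ z₁ := by
  rw [coneDist_Zgeo_eq_norm_chord_sub hs (hst.trans ht) (hs.trans hst) ht, chord_sub_chord,
    norm_mul, norm_real, Real.norm_of_nonneg (sub_nonneg.2 hst), coneDist_eq_norm_chord_sub]
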